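/- On C^4, define M_a as the von Neumann algebra generated by {S̃^1, |0⟩⟨0|+|3⟩⟨3|, |1⟩⟨1|+|2⟩⟨2|, 1} and M_ā as the von Neumann algebra generated by {S̃^3, |0⟩⟨0|+|1⟩⟨1|, |2⟩⟨2|+|3⟩⟨3|, 1}. Then M_ā = M_a', the center Z(M_a) = C·1 is trivial, and there is a unitary isomorphism C^4 ≅ C^2 ⊗ C^2 (sending |0⟩↦|↑↑⟩, |1⟩↦|↑↓⟩, |3⟩↦|↓↑⟩, |2⟩↦|↓↓⟩) under which M_a = L(C^2) ⊗ C·1 and M_ā = C·1 ⊗ L(C^2). -/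

import Mathlib

/-!
Under the relabelling `e`, the generators of `M_a` become `σ ⊗ 1, E₀₀ ⊗ 1, E₁₁ ⊗ 1` and those
of `M_ā` become `1 ⊗ σ, 1 ⊗ E₀₀, 1 ⊗ E₁₁`, where `σ = E₀₁ + E₁₀`. Since `E₀₁ = E₀₀ σ` and
`E₁₀ = E₁₁ σ`, these generate all of `L(ℂ²) ⊗ 1` and `1 ⊗ L(ℂ²)` respectively. The rest is the
matrix-unit computation that the commutant of `L(ℂ²) ⊗ 1` is `1 ⊗ L(ℂ²)` and that the two
algebras meet in the scalars.
-/

open Matrix Kronecker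

/-- `S̃¹ = |0⟩⟨1|+|1⟩⟨0|+|2⟩⟨3|+|3⟩⟨2|` on `ℂ⁴`. -/
noncomputable def St1 : Matrix (Fin 4) (Fin 4) ℂ :=
  Matrix.single 0 1 1 + Matrix.single 1 0 1 + Matrix.single 2 3 1 + Matrix.single 3 2 1

/-- `S̃³ = |0⟩⟨3|+|3⟩⟨0|+|1⟩⟨2|+|2⟩⟨1|` on `ℂ⁴`. -/
noncomputable def St3 : Matrix (Fin 4) (Fin 4) ℂ :=
  Matrix.single 0 3 1 + Matrix.single 3 0 1 + Matrix.single 1 2 1 + Matrix.single 2 1 1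

/-- `M_a`: the von Neumann algebra generated by `{S̃¹, |0⟩⟨0|+|3⟩⟨3|, |1⟩⟨1|+|2⟩⟨2|, 1}`. -/
noncomputable def Ma : StarSubalgebra ℂ (Matrix (Fin 4) (Fin 4) ℂ) :=
  StarAlgebra.adjoin ℂ
    {St1, Matrix.single 0 0 1 + Matrix.single 3 3 1,
      Matrix.single 1 1 1 + Matrix.single 2 2 1}

/-- `M_ā`: the von Neumann algebra generated by `{S̃³, |0⟩⟨0|+|1⟩⟨1|, |2⟩⟨2|+|3⟩⟨3|, 1}`. -/
noncomputable def Mabar : StarSubalgebra ℂ (Matrix (Fin 4) (Fin 4) ℂ) :=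
  StarAlgebra.adjoin ℂ
    {St3, Matrix.single 0 0 1 + Matrix.single 1 1 1,
      Matrix.single 2 2 1 + Matrix.single 3 3 1}

/-- The basis identification `ℂ⁴ ≅ ℂ² ⊗ ℂ²` sending
`|0⟩ ↦ |↑↑⟩, |1⟩ ↦ |↑↓⟩, |3⟩ ↦ |↓↑⟩, |2⟩ ↦ |↓↓⟩`, where the first component of the pair
carries the factor on which `M_a` acts. -/
def e : Fin 4 ≃ Fin 2 × Fin 2 where
  toFun := ![(0, 0), (1, 0), (1, 1), (0, 1)]
  invFun := fun p => ![![0, 3], ![1, 2]] p.1 p.2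
  left_inv := by decide
  right_inv := by decide

theorem MulEquiv.image_centralizer {M N : Type*} [Mul M] [Mul N] (f : M ≃* N) (S : Set M) :
    f '' Set.centralizer S = Set.centralizer (f '' S) := by
  ext y
  obtain ⟨x, rfl⟩ := f.surjective y
  simp [Set.mem_centralizer_iff, ← map_mul, f.injective.eq_iff]

theorem StarAlgHom.image_adjoin_eq_range {R A B C : Type*} [CommSemiring R] [StarRing R]
    [Semiring A] [StarRing A] [Algebra R A] [StarModule R A]
    [Semiring B] [StarRing B] [Algebra R B] [StarModule R B]
    [Semiring C] [StarRing C] [Algebra R C] [StarModule R C]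
    (f : A →⋆ₐ[R] B) (g : C →⋆ₐ[R] B) {s : Set A} {t : Set C}
    (ht : StarAlgebra.adjoin R t = ⊤) (hst : f '' s = g '' t) :
    f '' StarAlgebra.adjoin R s = Set.range g := by
  rw [← StarSubalgebra.coe_map, StarAlgHom.map_adjoin, hst, ← StarAlgHom.map_adjoin, ht,
    ← StarAlgHom.range_eq_map_top]
  rfl

namespace Matrix

variable {m n R : Type*} [DecidableEq m] [DecidableEq n]

section StarAlgebra

variable [Fintype m] [Fintype n] [CommSemiring R] [StarRing R]

def reindexStarAlgEquiv (e : m ≃ n) : Matrix m m R ≃⋆ₐ[R] Matrix n n R :=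
  .ofAlgEquiv (reindexAlgEquiv R R e) fun M => by simp [star_eq_conjTranspose]

variable (m n R) in
def kroneckerOneStarAlgHom : Matrix m m R →⋆ₐ[R] Matrix (m × n) (m × n) R where
  toFun A := A ⊗ₖ 1
  map_one' := one_kronecker_one
  map_mul' A B := by rw [← mul_kronecker_mul, one_mul]
  map_zero' := zero_kronecker _
  map_add' A B := add_kronecker _ _ _
  commutes' r := by simp [Algebra.algebraMap_eq_smul_one, smul_kronecker]
  map_star' A := by simp [star_eq_conjTranspose, conjTranspose_kronecker]

variable (m n R) in
def oneKroneckerStarAlgHom : Matrix n n R →⋆ₐ[R] Matrix (m × n) (m × n) R where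
  toFun B := 1 ⊗ₖ B
  map_one' := one_kronecker_one
  map_mul' A B := by rw [← mul_kronecker_mul, one_mul]
  map_zero' := kronecker_zero _
  map_add' A B := kronecker_add _ _ _
  commutes' r := by simp [Algebra.algebraMap_eq_smul_one, kronecker_smul]
  map_star' B := by simp [star_eq_conjTranspose, conjTranspose_kronecker]

theorem starSubalgebra_eq_top_of_single_mem {S : StarSubalgebra R (Matrix n n R)}
    (h : ∀ i j, single i j (1 : R) ∈ S) : S = ⊤ := by
  refine eq_top_iff.2 fun M _ => (matrix_eq_sum_single M).symm ▸ ?_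
  refine sum_mem fun i _ => sum_mem fun j _ => ?_
  simpa [smul_single] using S.smul_mem (h i j) (M i j)

theorem adjoin_swap_single_single_eq_top :
    StarAlgebra.adjoin R {single 0 1 1 + single 1 0 1, single 0 0 1, single 1 1 1} =
      (⊤ : StarSubalgebra R (Matrix (Fin 2) (Fin 2) R)) := by
  refine starSubalgebra_eq_top_of_single_mem fun i j => ?_
  have mem := StarAlgebra.subset_adjoin R
    ({single 0 1 1 + single 1 0 1, single 0 0 1, single 1 1 1} : Set (Matrix (Fin 2) (Fin 2) R))
  have hX := mem (Set.mem_insert _ _)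
  have h00 := mem (Set.mem_insert_of_mem _ (Set.mem_insert _ _))
  have h11 := mem (Set.mem_insert_of_mem _ (Set.mem_insert_of_mem _ (Set.mem_singleton _)))
  fin_cases i <;> fin_cases j
  · exact h00
  · simpa [mul_add] using mul_mem h00 hX
  · simpa [mul_add] using mul_mem h11 hX
  · exact h11

end StarAlgebra

variable [CommSemiring R]

theorem centralizer_range_kronecker_one [Fintype m] [Fintype n] :
    Set.centralizer (Set.range fun A : Matrix m m R => A ⊗ₖ (1 : Matrix n n R)) =
      Set.range fun B : Matrix n n R => (1 : Matrix m m R) ⊗ₖ B := by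
  refine subset_antisymm (fun X hX => ?_) ?_
  · rcases isEmpty_or_nonempty m with _ | ⟨⟨a₀⟩⟩
    · exact ⟨0, Subsingleton.elim _ _⟩
    -- the `((a, b), (c, d))` entry of `(E_ij ⊗ 1) X = X (E_ij ⊗ 1)`
    have key : ∀ i j a b c d,
        (if i = a then X (j, b) (c, d) else 0) = if j = c then X (a, b) (i, d) else 0 := by
      intro i j a b c d
      have := congrFun (congrFun (hX _ ⟨single i j 1, rfl⟩) (a, b)) (c, d)
      simpa [mul_apply, Fintype.sum_prod_type, single_apply, one_apply, ite_and] using this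
    refine ⟨of fun b d => X (a₀, b) (a₀, d), ?_⟩
    ext ⟨a, b⟩ ⟨c, d⟩
    by_cases hac : a = c
    · subst hac
      simpa using (key a₀ a a₀ b a d).symm
    · simpa [one_apply, hac, Ne.symm hac] using key c c a b c d
  · rintro _ ⟨B, rfl⟩ _ ⟨A, rfl⟩
    simp [← mul_kronecker_mul]

theorem range_kronecker_one_inter_range_one_kronecker :
    (Set.range fun A : Matrix m m R => A ⊗ₖ (1 : Matrix n n R)) ∩
        (Set.range fun B : Matrix n n R => (1 : Matrix m m R) ⊗ₖ B) =
      Set.range fun c : R => c • 1 := by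
  refine subset_antisymm ?_ ?_
  · rintro _ ⟨⟨A, rfl⟩, ⟨B, hB⟩⟩
    rcases isEmpty_or_nonempty m with _ | ⟨⟨a₀⟩⟩
    · exact ⟨0, Subsingleton.elim _ _⟩
    have entry : ∀ a c b, A a c = if a = c then B b b else 0 := fun a c b => by
      simpa [one_apply, eq_comm] using congrFun (congrFun hB (a, b)) (c, b)
    refine ⟨A a₀ a₀, ?_⟩
    ext ⟨a, b⟩ ⟨c, d⟩
    simp only [kronecker_apply, entry a c b, entry a₀ a₀ b, one_apply, smul_apply, Prod.mk.injEq]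
    split_ifs <;> simp_all
  · rintro _ ⟨c, rfl⟩
    exact ⟨⟨c • 1, by simp [smul_kronecker]⟩, ⟨c • 1, by simp [kronecker_smul]⟩⟩

end Matrix

theorem reindex_St1 :
    reindex e e St1 = (single 0 1 1 + single 1 0 1) ⊗ₖ (1 : Matrix (Fin 2) (Fin 2) ℂ) := by
  ext ⟨a, b⟩ ⟨c, d⟩
  fin_cases a <;> fin_cases b <;> fin_cases c <;> fin_cases d <;> simp [St1, e, one_apply]

theorem reindex_single_zero_add_single_three :
    reindex e e (single 0 0 1 + single 3 3 1) = single 0 0 1 ⊗ₖ (1 : Matrix (Fin 2) (Fin 2) ℂ) := by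
  ext ⟨a, b⟩ ⟨c, d⟩
  fin_cases a <;> fin_cases b <;> fin_cases c <;> fin_cases d <;> simp [e, one_apply]

theorem reindex_single_one_add_single_two :
    reindex e e (single 1 1 1 + single 2 2 1) = single 1 1 1 ⊗ₖ (1 : Matrix (Fin 2) (Fin 2) ℂ) := by
  ext ⟨a, b⟩ ⟨c, d⟩
  fin_cases a <;> fin_cases b <;> fin_cases c <;> fin_cases d <;> simp [e, one_apply]

theorem reindex_St3 :
    reindex e e St3 = (1 : Matrix (Fin 2) (Fin 2) ℂ) ⊗ₖ (single 0 1 1 + single 1 0 1) := by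
  ext ⟨a, b⟩ ⟨c, d⟩
  fin_cases a <;> fin_cases b <;> fin_cases c <;> fin_cases d <;> simp [St3, e, one_apply]

theorem reindex_single_zero_add_single_one :
    reindex e e (single 0 0 1 + single 1 1 1) = (1 : Matrix (Fin 2) (Fin 2) ℂ) ⊗ₖ single 0 0 1 := by
  ext ⟨a, b⟩ ⟨c, d⟩
  fin_cases a <;> fin_cases b <;> fin_cases c <;> fin_cases d <;> simp [e, one_apply]

theorem reindex_single_two_add_single_three :
    reindex e e (single 2 2 1 + single 3 3 1) = (1 : Matrix (Fin 2) (Fin 2) ℂ) ⊗ₖ single 1 1 1 := by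
  ext ⟨a, b⟩ ⟨c, d⟩
  fin_cases a <;> fin_cases b <;> fin_cases c <;> fin_cases d <;> simp [e, one_apply]

theorem image_reindex_Ma :
    reindex e e '' (Ma : Set (Matrix (Fin 4) (Fin 4) ℂ)) =
      Set.range fun A : Matrix (Fin 2) (Fin 2) ℂ => A ⊗ₖ (1 : Matrix (Fin 2) (Fin 2) ℂ) :=
  StarAlgHom.image_adjoin_eq_range (reindexStarAlgEquiv (R := ℂ) e).toStarAlgHom
    (kroneckerOneStarAlgHom (Fin 2) (Fin 2) ℂ) adjoin_swap_single_single_eq_top <| by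
      change reindex e e '' _ = (· ⊗ₖ 1) '' _
      simp only [Set.image_insert_eq, Set.image_singleton, reindex_St1,
        reindex_single_zero_add_single_three, reindex_single_one_add_single_two]

theorem image_reindex_Mabar :
    reindex e e '' (Mabar : Set (Matrix (Fin 4) (Fin 4) ℂ)) =
      Set.range fun A : Matrix (Fin 2) (Fin 2) ℂ => (1 : Matrix (Fin 2) (Fin 2) ℂ) ⊗ₖ A :=
  StarAlgHom.image_adjoin_eq_range (reindexStarAlgEquiv (R := ℂ) e).toStarAlgHom
    (oneKroneckerStarAlgHom (Fin 2) (Fin 2) ℂ) adjoin_swap_single_single_eq_top <| by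
      change reindex e e '' _ = (1 ⊗ₖ ·) '' _
      simp only [Set.image_insert_eq, Set.image_singleton, reindex_St3,
        reindex_single_zero_add_single_one, reindex_single_two_add_single_three]

/-- **type-3 split.** `M_ā = M_a'`, the center `Z(M_a) = ℂ·1` is trivial,
and under the unitary identification `ℂ⁴ ≅ ℂ² ⊗ ℂ²` given by `e` one has
`M_a = L(ℂ²) ⊗ ℂ·1` and `M_ā = ℂ·1 ⊗ L(ℂ²)`. -/
theorem type_three_split :
    (Mabar : Set (Matrix (Fin 4) (Fin 4) ℂ)) =
      Set.centralizer (Ma : Set (Matrix (Fin 4) (Fin 4) ℂ)) ∧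
    (Ma : Set (Matrix (Fin 4) (Fin 4) ℂ)) ∩
        Set.centralizer (Ma : Set (Matrix (Fin 4) (Fin 4) ℂ)) =
      Set.range (fun c : ℂ => c • (1 : Matrix (Fin 4) (Fin 4) ℂ)) ∧
    (fun M => Matrix.reindex e e M) '' (Ma : Set (Matrix (Fin 4) (Fin 4) ℂ)) =
      {B : Matrix (Fin 2 × Fin 2) (Fin 2 × Fin 2) ℂ |
        ∃ A : Matrix (Fin 2) (Fin 2) ℂ, B = A ⊗ₖ (1 : Matrix (Fin 2) (Fin 2) ℂ)} ∧
    (fun M => Matrix.reindex e e M) '' (Mabar : Set (Matrix (Fin 4) (Fin 4) ℂ)) =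
      {B : Matrix (Fin 2 × Fin 2) (Fin 2 × Fin 2) ℂ |
        ∃ A : Matrix (Fin 2) (Fin 2) ℂ, B = (1 : Matrix (Fin 2) (Fin 2) ℂ) ⊗ₖ A} := by
  let ρ := (reindexAlgEquiv ℂ ℂ e).toMulEquiv
  have hρ : ⇑ρ = reindex e e := rfl
  have hinj : Function.Injective (Set.image ρ) := Set.image_injective.2 ρ.injective
  have hcent :
      ρ '' Set.centralizer Ma = Set.range fun B => (1 : Matrix (Fin 2) (Fin 2) ℂ) ⊗ₖ B := by
    rw [ρ.image_centralizer, hρ, image_reindex_Ma, centralizer_range_kronecker_one]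
  refine ⟨hinj ?_, hinj ?_, ?_, ?_⟩
  · rw [hcent, hρ, image_reindex_Mabar]
  · rw [Set.image_inter ρ.injective, hcent, hρ, image_reindex_Ma,
      range_kronecker_one_inter_range_one_kronecker, ← Set.range_comp]
    simp [Function.comp_def, submatrix_smul, submatrix_one_equiv]
  · rw [image_reindex_Ma]
    ext
    simp [eq_comm]
  · rw [image_reindex_Mabar]
    ext
    simp [eq_comm]
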